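/- arXiv:2409.08222 — 2 statements merged into one kernel-verified Lean document; each statement's English description precedes it below -/
import Mathlib

section
/- Let G be a finite weighted digraph on N nodes with all edge weights positive except a zero-weight self-loop at the goal node N, and suppose every node can reach N. If γ ∈ (0,1) satisfies γ ≥ 1 - C_min/d_max, where C_min is the minimum positive edge weight and d_max = max_p d_G(p,N), then for every node p the minimum discounted cost to reach N along a path (with stage cost at step t discounted by γ^t) is achieved by a path with no repeated nodes. -/
/-- `l.head? = some p`, `l.getLast? = some g`, and consecutive nodes joined by edges. -/
def IsPathFrom {α : Type*} (E : α → α → Prop) (l : List α) (p g : α) : Prop :=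
  l.head? = some p ∧ l.getLast? = some g ∧ l.Chain' E

/-- Discounted cost of a path: `∑_{t} γ^t W_{p_t p_{t+1}}`. -/
def pathCost {α : Type*} (W : α → α → ℝ) (γ : ℝ) : List α → ℝ
  | [] => 0
  | [_] => 0
  | a :: b :: l => W a b + γ * pathCost W γ (b :: l)

/-!
Let `V a` be the least discounted cost of a simple path from `a` to `g`: there are finitely many
such paths, and cycle removal (harmless without discounting) yields one whose cost is at most
`d_G(a) ≤ dmax`, so `V a ≤ dmax`. Induction along an arbitrary path reduces the theorem to the
Bellman inequality `V a ≤ W a b + γ V b` for every edge `a → b`. Prepending `a` to an optimal simple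
path `s` from `b` gives a simple path unless `a` already lies on `s`. In that case `a :: s` splits
into a cycle of `k` edges through `a` followed by a simple path from `a`; no edge of the cycle is
the zero loop at `g`, so the cycle costs at least
`C_min (1 + γ + ⋯ + γ^(k-1)) ≥ (1 - γ^k) dmax ≥ (1 - γ^k) V a`, and the whole path at least `V a`.
-/

open Finset

theorem List.exists_eq_append_cons_append_cons_of_not_nodup {α : Type*} :
    ∀ {l : List α}, ¬ l.Nodup → ∃ A x B C, l = A ++ x :: B ++ x :: C
  | [], h => absurd List.nodup_nil h
  | a :: l, h => by
    by_cases ha : a ∈ l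
    · obtain ⟨B, C, rfl⟩ := List.append_of_mem ha
      exact ⟨[], a, B, C, rfl⟩
    · obtain ⟨A, x, B, C, rfl⟩ :=
        exists_eq_append_cons_append_cons_of_not_nodup fun hl => h (List.nodup_cons.2 ⟨ha, hl⟩)
      exact ⟨a :: A, x, B, C, rfl⟩

theorem List.IsChain.and_ne_of_nodup {α : Type*} {R : α → α → Prop} :
    ∀ {l : List α}, l.IsChain R → l.Nodup → l.IsChain fun a b => R a b ∧ a ≠ b
  | [], _, _ => .nil
  | [a], _, _ => .singleton a
  | a :: b :: l, h, hnd => by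
    rw [List.isChain_cons_cons] at h ⊢
    exact ⟨⟨h.1, fun hab => List.not_nodup_cons_of_mem (hab ▸ List.mem_cons_self) hnd⟩,
      h.2.and_ne_of_nodup hnd.of_cons⟩

namespace IsPathFrom

variable {α : Type*} {E : α → α → Prop} {l A B C : List α} {a b p g x : α}

theorem chain (h : IsPathFrom E l p g) : l.IsChain E := h.2.2

theorem ne_nil (h : IsPathFrom E l p g) : l ≠ [] := by
  rintro rfl
  exact absurd h.1 (by simp)

theorem singleton (g : α) : IsPathFrom E [g] g g := ⟨rfl, rfl, .singleton g⟩

theorem exists_eq_cons (h : IsPathFrom E l p g) : ∃ t, l = p :: t := by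
  obtain ⟨h₁, -⟩ := h
  cases l with
  | nil => simp at h₁
  | cons q t => exact ⟨t, by simp_all⟩

theorem cons (hab : E a b) (h : IsPathFrom E l b g) : IsPathFrom E (a :: l) a g := by
  obtain ⟨t, rfl⟩ := h.exists_eq_cons
  exact ⟨rfl, by simpa using h.2.1, List.isChain_cons_cons.2 ⟨hab, h.chain⟩⟩

theorem of_cons_cons (h : IsPathFrom E (a :: b :: l) p g) :
    p = a ∧ E a b ∧ IsPathFrom E (b :: l) b g := by
  obtain ⟨hhead, hlast, hchain⟩ := h
  replace hchain := List.isChain_cons_cons.1 hchain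
  exact ⟨by simpa using hhead.symm, hchain.1, rfl, by simpa using hlast, hchain.2⟩

theorem of_append_cons (h : IsPathFrom E (A ++ x :: B) p g) : IsPathFrom E (x :: B) x g :=
  ⟨rfl, by simpa [List.getLast?_append_cons] using h.2.1, h.chain.right_of_append⟩

theorem shortcut (h : IsPathFrom E (A ++ x :: B ++ x :: C) p g) :
    IsPathFrom E (A ++ x :: C) p g := by
  obtain ⟨hhead, hlast, hchain⟩ := h
  rw [List.getLast?_append_cons] at hlast
  refine ⟨by cases A <;> simpa using hhead, by rwa [List.getLast?_append_cons], ?_⟩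
  have hAx : (A ++ [x]).IsChain E := hchain.left_of_append.prefix ⟨B, by simp⟩
  have hAxC := hAx.append_overlap (l₃ := C) hchain.right_of_append (List.cons_ne_nil x [])
  rw [List.append_assoc, List.singleton_append] at hAxC
  exact hAxC

end IsPathFrom

section pathCost

variable {α : Type*} {E : α → α → Prop} {W : α → α → ℝ} {γ c : ℝ}

theorem IsPathFrom.pathCost_cons {l : List α} {a b g : α} (h : IsPathFrom E l b g) :
    pathCost W γ (a :: l) = W a b + γ * pathCost W γ l := by
  obtain ⟨t, rfl⟩ := h.exists_eq_cons
  rfl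

theorem pathCost_append_cons (x : α) : ∀ A B : List α,
    pathCost W γ (A ++ x :: B) = pathCost W γ (A ++ [x]) + γ ^ A.length * pathCost W γ (x :: B)
  | [], B => by simp [pathCost]
  | [a], B => by simp [pathCost]
  | a :: c :: A, B => by
    have ih := pathCost_append_cons x (c :: A) B
    simp only [List.cons_append, List.length_cons, pathCost] at ih ⊢
    rw [ih, pow_succ]
    ring

theorem pathCost_nonneg (hW : ∀ a b, E a b → 0 ≤ W a b) (hγ : 0 ≤ γ) :
    ∀ {l : List α}, l.IsChain E → 0 ≤ pathCost W γ l
  | [], _ | [_], _ => le_rfl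
  | a :: b :: l, h => by
    rw [List.isChain_cons_cons] at h
    exact add_nonneg (hW a b h.1) (mul_nonneg hγ (pathCost_nonneg hW hγ h.2))

theorem pathCost_le_pathCost_one (hW : ∀ a b, E a b → 0 ≤ W a b) (hγ0 : 0 ≤ γ) (hγ1 : γ ≤ 1) :
    ∀ {l : List α}, l.IsChain E → pathCost W γ l ≤ pathCost W 1 l
  | [], _ | [_], _ => le_rfl
  | a :: b :: l, h => by
    rw [List.isChain_cons_cons] at h
    have ih := pathCost_le_pathCost_one hW hγ0 hγ1 h.2
    exact add_le_add le_rfl (mul_le_mul hγ1 ih (pathCost_nonneg hW hγ0 h.2) zero_le_one)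

theorem mul_geom_sum_le_pathCost (hγ : 0 ≤ γ) :
    ∀ {l : List α}, l.IsChain (fun a b => c ≤ W a b) →
      c * ∑ i ∈ range (l.length - 1), γ ^ i ≤ pathCost W γ l
  | [], _ | [_], _ => by simp [pathCost]
  | a :: b :: l, h => by
    rw [List.isChain_cons_cons] at h
    have ih := mul_le_mul_of_nonneg_left (mul_geom_sum_le_pathCost hγ h.2) hγ
    simp only [List.length_cons, Nat.add_sub_cancel, geom_sum_succ, pathCost] at ih ⊢
    linarith [h.1]

theorem pathCost_one_shortcut_le (hW : ∀ a b, E a b → 0 ≤ W a b) {A B C : List α} {x p g : α}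
    (h : IsPathFrom E (A ++ x :: B ++ x :: C) p g) :
    pathCost W 1 (A ++ x :: C) ≤ pathCost W 1 (A ++ x :: B ++ x :: C) := by
  have hcycle : 0 ≤ pathCost W 1 (x :: B ++ [x]) :=
    pathCost_nonneg hW zero_le_one (h.chain.infix ⟨A, C, by simp⟩)
  rw [show A ++ x :: B ++ x :: C = A ++ x :: (B ++ x :: C) by simp, pathCost_append_cons x A C,
    pathCost_append_cons x A (B ++ x :: C), ← List.cons_append, pathCost_append_cons x (x :: B) C]
  simp only [one_pow, one_mul]
  linarith

theorem exists_nodup_pathCost_one_le (hW : ∀ a b, E a b → 0 ≤ W a b) {l : List α} {p g : α}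
    (h : IsPathFrom E l p g) :
    ∃ s, IsPathFrom E s p g ∧ s.Nodup ∧ pathCost W 1 s ≤ pathCost W 1 l := by
  by_cases hl : l.Nodup
  · exact ⟨l, h, hl, le_rfl⟩
  obtain ⟨A, x, B, C, rfl⟩ := List.exists_eq_append_cons_append_cons_of_not_nodup hl
  obtain ⟨s, hs, hsnd, hsl⟩ := exists_nodup_pathCost_one_le hW h.shortcut
  exact ⟨s, hs, hsnd, hsl.trans (pathCost_one_shortcut_le hW h)⟩
termination_by l.length
decreasing_by simp_all

end pathCost

theorem le_add_pow_mul_of_mul_geom_sum_le {γ c D v K T : ℝ} {k : ℕ} (hγ0 : 0 ≤ γ) (hγ1 : γ ≤ 1)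
    (hcD : (1 - γ) * D ≤ c) (hK : c * ∑ i ∈ range k, γ ^ i ≤ K) (hvD : v ≤ D) (hvT : v ≤ T) :
    v ≤ K + γ ^ k * T := by
  have hγk : γ ^ k ≤ 1 := pow_le_one₀ hγ0 hγ1
  have hDK : (1 - γ ^ k) * D ≤ K :=
    calc (1 - γ ^ k) * D = (1 - γ) * D * ∑ i ∈ range k, γ ^ i := by rw [← mul_neg_geom_sum]; ring
      _ ≤ c * ∑ i ∈ range k, γ ^ i := by gcongr
      _ ≤ K := hK
  nlinarith [mul_le_mul_of_nonneg_left hvD (sub_nonneg.2 hγk),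
    mul_le_mul_of_nonneg_left hvT (pow_nonneg hγ0 k)]

section Discounted

variable {α : Type*} {E : α → α → Prop} {W : α → α → ℝ} {γ c D : ℝ} {g : α}

theorem weight_le_of_nodup (hW : ∀ i j, E i j → (i, j) ≠ (g, g) → c ≤ W i j) {l : List α}
    (hl : l.IsChain E) (hnd : l.Nodup) : l.IsChain fun i j => c ≤ W i j :=
  (hl.and_ne_of_nodup hnd).imp fun i j hij => hW i j hij.1 fun h => hij.2 (by simp_all)

theorem le_weight_add_mul_pathCost_of_nodup (hW : ∀ i j, E i j → (i, j) ≠ (g, g) → c ≤ W i j)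
    (hW0 : ∀ i j, E i j → 0 ≤ W i j) (hγ0 : 0 ≤ γ) (hγ1 : γ ≤ 1) (hcD : (1 - γ) * D ≤ c)
    {V : α → ℝ} (hV : ∀ a l, IsPathFrom E l a g → l.Nodup → V a ≤ pathCost W γ l)
    (hVD : ∀ a, V a ≤ D) {a b : α} {s : List α} (hab : E a b) (hs : IsPathFrom E s b g)
    (hsnd : s.Nodup) :
    V a ≤ W a b + γ * pathCost W γ s := by
  rw [← hs.pathCost_cons]
  by_cases has : a ∈ s
  swap
  · exact hV a _ (hs.cons hab) (List.nodup_cons.2 ⟨has, hsnd⟩)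
  by_cases hag : a = g
  · subst hag
    exact (hV a [a] (.singleton a) (List.nodup_singleton a)).trans
      (pathCost_nonneg hW0 hγ0 (hs.cons hab).chain)
  have hweights : (a :: s).IsChain fun i j => c ≤ W i j := by
    refine (weight_le_of_nodup hW hs.chain hsnd).cons fun y hy => ?_
    rw [hs.1, Option.mem_some_iff] at hy
    exact hy ▸ hW a b hab (by simp [hag])
  obtain ⟨A, B, rfl⟩ := List.append_of_mem has
  have hcycle : (a :: A ++ [a]).IsChain fun i j => c ≤ W i j :=
    hweights.prefix ⟨B, by simp⟩
  have := le_add_pow_mul_of_mul_geom_sum_le hγ0 hγ1 hcD (mul_geom_sum_le_pathCost hγ0 hcycle)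
    (hVD a) (hV a _ hs.of_append_cons (hsnd.sublist (List.sublist_append_right A _)))
  rw [← List.cons_append, pathCost_append_cons]
  simpa using this

theorem le_pathCost_of_le_pathCost_nodup (hW : ∀ i j, E i j → (i, j) ≠ (g, g) → c ≤ W i j)
    (hW0 : ∀ i j, E i j → 0 ≤ W i j) (hγ0 : 0 ≤ γ) (hγ1 : γ ≤ 1) (hcD : (1 - γ) * D ≤ c)
    {V : α → ℝ} (hV : ∀ a l, IsPathFrom E l a g → l.Nodup → V a ≤ pathCost W γ l)
    (hVD : ∀ a, V a ≤ D)
    (hVattained : ∀ a, ∃ s, IsPathFrom E s a g ∧ s.Nodup ∧ pathCost W γ s ≤ V a) :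
    ∀ {l : List α} {a : α}, IsPathFrom E l a g → V a ≤ pathCost W γ l
  | [], _, h => absurd rfl h.ne_nil
  | [x], a, h => hV a [x] h (List.nodup_singleton x)
  | x :: y :: t, a, h => by
    obtain ⟨rfl, hxy, ht⟩ := h.of_cons_cons
    obtain ⟨s, hs, hsnd, hsV⟩ := hVattained y
    have ih := le_pathCost_of_le_pathCost_nodup hW hW0 hγ0 hγ1 hcD hV hVD hVattained ht
    calc V a ≤ W a y + γ * pathCost W γ s :=
          le_weight_add_mul_pathCost_of_nodup hW hW0 hγ0 hγ1 hcD hV hVD hxy hs hsnd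
      _ ≤ W a y + γ * pathCost W γ (y :: t) := by gcongr; exact hsV.trans ih
      _ = pathCost W γ (a :: y :: t) := rfl

theorem exists_nodup_forall_pathCost_le [Fintype α]
    (hW : ∀ i j, E i j → (i, j) ≠ (g, g) → c ≤ W i j)
    (hW0 : ∀ i j, E i j → 0 ≤ W i j) (hγ0 : 0 ≤ γ) (hγ1 : γ ≤ 1) (hcD : (1 - γ) * D ≤ c)
    (hD : ∀ a, ∃ s, IsPathFrom E s a g ∧ s.Nodup ∧ pathCost W γ s ≤ D) (p : α) :
    ∃ l, IsPathFrom E l p g ∧ l.Nodup ∧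
      ∀ l', IsPathFrom E l' p g → pathCost W γ l ≤ pathCost W γ l' := by
  have hfin (a : α) : {l | IsPathFrom E l a g ∧ l.Nodup}.Finite :=
    (List.finite_length_le α (Fintype.card α)).subset fun l hl => hl.2.length_le_card
  have hne (a : α) : {l | IsPathFrom E l a g ∧ l.Nodup}.Nonempty :=
    let ⟨s, hs, hsnd, _⟩ := hD a; ⟨s, hs, hsnd⟩
  choose m hm hmin using fun a => Set.exists_min_image _ (pathCost W γ) (hfin a) (hne a)
  have hV (a : α) (l : List α) (hl : IsPathFrom E l a g) (hnd : l.Nodup) :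
      pathCost W γ (m a) ≤ pathCost W γ l :=
    hmin a l ⟨hl, hnd⟩
  have hVD (a : α) : pathCost W γ (m a) ≤ D :=
    let ⟨s, hs, hsnd, hsD⟩ := hD a; (hV a s hs hsnd).trans hsD
  refine ⟨m p, (hm p).1, (hm p).2, fun l' hl' => ?_⟩
  exact le_pathCost_of_le_pathCost_nodup hW hW0 hγ0 hγ1 hcD hV hVD
    (fun a => ⟨m a, (hm a).1, (hm a).2, le_rfl⟩) hl'

end Discounted

theorem one_sub_mul_le_of_one_sub_div_le {γ c D : ℝ} (hc : 0 < c) (hγ : γ ≤ 1)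
    (h : 1 - c / D ≤ γ) : (1 - γ) * D ≤ c := by
  rcases le_or_gt D 0 with hD | hD
  · nlinarith
  · exact (le_div_iff₀ hD).1 (by linarith)

/-- On a finite weighted digraph with positive edge weights
(except a zero-cost self-loop at the goal `g`), if every node can reach `g`
and `γ ∈ (0,1)` satisfies `γ ≥ 1 - Cmin / dmax`, then for every node `p` the
minimum discounted cost to reach `g` is achieved by a path with no repeated
nodes. -/
theorem optimal_discounted_path_is_simple {N : ℕ} (g : Fin N)
    (E : Fin N → Fin N → Prop) (W : Fin N → Fin N → ℝ)
    (Cmin dmax γ : ℝ) (hCmin : 0 < Cmin)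
    (hWpos : ∀ i j : Fin N, E i j → (i, j) ≠ (g, g) → Cmin ≤ W i j)
    (hself : E g g ∧ W g g = 0)
    (dG : Fin N → ℝ)
    (hdG : ∀ p : Fin N,
      IsLeast {c : ℝ | ∃ l : List (Fin N), IsPathFrom E l p g ∧ pathCost W 1 l = c} (dG p))
    (hdmax : ∀ p : Fin N, dG p ≤ dmax)
    (hγ0 : 0 < γ) (hγ1 : γ < 1) (hγc : 1 - Cmin / dmax ≤ γ) :
    ∀ p : Fin N, ∃ l : List (Fin N), IsPathFrom E l p g ∧ l.Nodup ∧
      ∀ l' : List (Fin N), IsPathFrom E l' p g → pathCost W γ l ≤ pathCost W γ l' := by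
  have hW0 (i j : Fin N) (hij : E i j) : 0 ≤ W i j := by
    by_cases hg : (i, j) = (g, g)
    · simp_all
    · exact hCmin.le.trans (hWpos i j hij hg)
  refine exists_nodup_forall_pathCost_le hWpos hW0 hγ0.le hγ1.le
    (one_sub_mul_le_of_one_sub_div_le hCmin hγ1.le hγc) fun a => ?_
  obtain ⟨l, hl, hld⟩ := (hdG a).1
  obtain ⟨s, hs, hsnd, hsl⟩ := exists_nodup_pathCost_one_le hW0 hl
  exact ⟨s, hs, hsnd, (pathCost_le_pathCost_one hW0 hγ0.le hγ1.le hs.chain).trans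
    (hsl.trans (hld.trans_le (hdmax a)))⟩
end

section
/- Suppose a blue robot moves on a time-varying graph G(t) ∈ {G^1,...,G^K} (all sharing node/edge sets, with Ḡ the elementwise-max-weight graph), choosing at each step the action defined by the security strategy: a_blue ∈ argmin_{p⁺ ∈ N_out(p)} [W^{k(t)}_{p p⁺} + d_{Ḡ}(p⁺,N)], where G^{k(t)} is the current graph. Then regardless of how the adversary selects the graph sequence, the total (undiscounted) accumulated cost from initial position p until reaching the goal N is at most V̄(p, k(0)) = min_{p⁺} [W^{k(0)}_{p p⁺} + d_{Ḡ}(p⁺,N)], and in particular at most d_{Ḡ}(p,N). -/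
/-- A blue robot on a time-varying graph `G(t) ∈ {G^1,…,G^K}`
(all sharing nodes/edges, `Ḡ` the elementwise-max-weight graph with
distance-to-goal `dbar`), which at every step picks an out-neighbor minimizing
`W^{k(t)}_{p p⁺} + dbar p⁺`, accumulates — regardless of the adversary's graph
sequence `k(t)` — a total undiscounted cost of at most
`V̄(p(0), k(0)) = min_{p⁺}[W^{k(0)}_{p(0) p⁺} + dbar p⁺] ≤ dbar (p 0)`, and
eventually reaches the goal `g`. -/
theorem blue_security_strategy_bound {N K : ℕ} (g : Fin N)
    (Nout : Fin N → Finset (Fin N)) (hNout : ∀ p, (Nout p).Nonempty)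
    (W : Fin K → Fin N → Fin N → ℝ) (Wbar : Fin N → Fin N → ℝ)
    (hWnn : ∀ (k : Fin K) (i j : Fin N), 0 ≤ W k i j)
    (hWle : ∀ (k : Fin K) (i j : Fin N), W k i j ≤ Wbar i j)
    (Cmin : ℝ) (hCmin : 0 < Cmin)
    (hWmin : ∀ (k : Fin K) (i j : Fin N), j ∈ Nout i → (i, j) ≠ (g, g) →
      Cmin ≤ W k i j)
    (hgself : g ∈ Nout g) (hgzero : ∀ k : Fin K, W k g g = 0)
    (hgbar : Wbar g g = 0)
    (dbar : Fin N → ℝ) (hdbarg : dbar g = 0)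
    (hBell : ∀ p : Fin N, p ≠ g →
      dbar p = (Nout p).inf' (hNout p) fun q => Wbar p q + dbar q)
    (p : ℕ → Fin N) (k : ℕ → Fin K)
    (hblue : ∀ t : ℕ, p (t + 1) ∈ Nout (p t) ∧
      ∀ q ∈ Nout (p t),
        W (k t) (p t) (p (t + 1)) + dbar (p (t + 1)) ≤ W (k t) (p t) q + dbar q) :
    (∀ T : ℕ, ∑ t ∈ Finset.range T, W (k t) (p t) (p (t + 1)) ≤
        (Nout (p 0)).inf' (hNout (p 0)) fun q => W (k 0) (p 0) q + dbar q) ∧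
    ((Nout (p 0)).inf' (hNout (p 0)) fun q => W (k 0) (p 0) q + dbar q) ≤ dbar (p 0) ∧
    (∃ T : ℕ, p T = g) := by
  -- nonnegativity of dbar
  have hdnn : ∀ q, 0 ≤ dbar q := by
    obtain ⟨m, -, hm⟩ := Finset.exists_min_image Finset.univ dbar ⟨g, Finset.mem_univ g⟩
    intro q
    by_cases hmg : m = g
    · have := hm q (Finset.mem_univ q)
      rw [hmg, hdbarg] at this; exact this
    · exfalso
      obtain ⟨q', hq', hq'eq⟩ := Finset.exists_mem_eq_inf' (hNout m) (fun r => Wbar m r + dbar r)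
      have hb : dbar m = Wbar m q' + dbar q' := by rw [hBell m hmg, hq'eq]
      have h1 : Cmin ≤ W (k 0) m q' :=
        hWmin (k 0) m q' hq' (fun h => hmg (congrArg Prod.fst h))
      have h2 : W (k 0) m q' ≤ Wbar m q' := hWle (k 0) m q'
      have h3 : dbar m ≤ dbar q' := hm q' (Finset.mem_univ q')
      linarith
  -- strict positivity off the goal
  have hdpos : ∀ q, q ≠ g → Cmin ≤ dbar q := by
    intro q hq
    rw [hBell q hq]
    apply Finset.le_inf'
    intro r hr
    have h1 : Cmin ≤ W (k 0) q r := hWmin (k 0) q r hr (fun h => hq (congrArg Prod.fst h))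
    have h2 := hWle (k 0) q r
    have h3 := hdnn r
    linarith
  -- the one-step inequality versus the current value
  have hstep : ∀ t, W (k t) (p t) (p (t + 1)) + dbar (p (t + 1)) ≤
      (Nout (p t)).inf' (hNout (p t)) fun q => W (k t) (p t) q + dbar q := by
    intro t
    exact Finset.le_inf' _ _ (fun q hq => (hblue t).2 q hq)
  -- the value is at most dbar (p t)
  have hVle : ∀ t, ((Nout (p t)).inf' (hNout (p t)) fun q => W (k t) (p t) q + dbar q)
      ≤ dbar (p t) := by
    intro t
    by_cases h : p t = g
    · have hmem : g ∈ Nout (p t) := by rw [h]; exact hgself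
      have h1 := Finset.inf'_le (fun q => W (k t) (p t) q + dbar q) hmem
      have h2 : W (k t) (p t) g = 0 := by rw [h, hgzero]
      have h3 : 0 ≤ dbar (p t) := hdnn _
      simp only [h2, hdbarg] at h1
      linarith
    · rw [hBell _ h]
      apply Finset.le_inf'
      intro q hq
      have h2 : W (k t) (p t) q + dbar q ≤ Wbar (p t) q + dbar q := by
        linarith [hWle (k t) (p t) q]
      exact le_trans (Finset.inf'_le _ hq) h2
  have hstep' : ∀ t, W (k t) (p t) (p (t + 1)) + dbar (p (t + 1)) ≤ dbar (p t) :=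
    fun t => (hstep t).trans (hVle t)
  -- auxiliary telescoping bound starting from time 1
  have haux : ∀ T, (∑ t ∈ Finset.range T, W (k (t + 1)) (p (t + 1)) (p (t + 2)))
      + dbar (p (T + 1)) ≤ dbar (p 1) := by
    intro T
    induction T with
    | zero => simp
    | succ S ih =>
      rw [Finset.sum_range_succ]
      have := hstep' (S + 1)
      linarith
  -- first claim
  have hfirst : ∀ T : ℕ, ∑ t ∈ Finset.range T, W (k t) (p t) (p (t + 1)) ≤
      (Nout (p 0)).inf' (hNout (p 0)) fun q => W (k 0) (p 0) q + dbar q := by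
    intro T
    cases T with
    | zero =>
      simp only [Finset.range_zero, Finset.sum_empty]
      apply Finset.le_inf'
      intro q hq
      have := hWnn (k 0) (p 0) q
      have := hdnn q
      linarith
    | succ S =>
      rw [Finset.sum_range_succ']
      have h1 := haux S
      have h2 := hstep 0
      have h3 := hdnn (p (S + 1))
      linarith
  refine ⟨hfirst, hVle 0, ?_⟩
  -- eventual arrival
  by_contra hno
  push_neg at hno
  obtain ⟨n, hn⟩ := exists_nat_gt (dbar (p 0) / Cmin)
  have hlow : ∀ t ∈ Finset.range n, Cmin ≤ W (k t) (p t) (p (t + 1)) := by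
    intro t _
    exact hWmin (k t) (p t) (p (t + 1)) (hblue t).1 (fun h => hno t (congrArg Prod.fst h))
  have hsumlow : (n : ℝ) * Cmin ≤ ∑ t ∈ Finset.range n, W (k t) (p t) (p (t + 1)) := by
    calc (n : ℝ) * Cmin = ∑ _t ∈ Finset.range n, Cmin := by
          rw [Finset.sum_const, Finset.card_range, nsmul_eq_mul]
      _ ≤ _ := Finset.sum_le_sum hlow
  have hbig : (n : ℝ) * Cmin > dbar (p 0) := by
    rw [gt_iff_lt, ← div_lt_iff₀ hCmin]
    exact hn
  have := (hfirst n).trans (hVle 0)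
  linarith
end
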